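/- (Upper-confidence direction of Lemma 1.) Suppose μ_m ∈ Φ(L) for all m ∈ [M], the learnability assumption holds with parameters (α, ε_α), every arm is pulled at least τ times in every episode, and the episodes are mutually independent. Let β ∈ (0, α), ε_β > ε_α, ε' := ε_β − ε_α. If τ ≥ (4 / (Δ_x² ε'²)) · ( ln(2K) + 1/(α − β) ), then Pr[ ℓ_β ≤ L − ε_β ] ≤ exp( −(τ Δ_x² ε'² / 4) · (α − β) · M ). -/

import Mathlib

open Real Finset MeasureTheory ProbabilityTheory

noncomputable section

/-- The Lipschitz structure `Φ(L)` for embedding `x`. -/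
def Phi {K D : ℕ} (x : Fin K → EuclideanSpace ℝ (Fin D)) (L : ℝ) : Set (Fin K → ℝ) :=
  {μ | (∀ i, μ i ∈ Set.Icc (0:ℝ) 1) ∧ ∀ i j, |μ i - μ j| ≤ L * dist (x i) (x j)}

/-- `Δ_x`: the minimal distance between two distinct embedded arms. -/
def Δemb {K D : ℕ} (x : Fin K → EuclideanSpace ℝ (Fin D)) : ℝ :=
  sInf {r : ℝ | ∃ i j : Fin K, i ≠ j ∧ r = dist (x i) (x j)}

/-- The tightest Lipschitz constant of a mean vector `a` w.r.t. embedding `x`: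
`max_{i ≠ j} |a(i) − a(j)| / d(i,j)`. -/
def lipConst {K D : ℕ} (x : Fin K → EuclideanSpace ℝ (Fin D)) (a : Fin K → ℝ) : ℝ :=
  sSup {r : ℝ | ∃ i j : Fin K, i ≠ j ∧ r = |a i - a j| / dist (x i) (x j)}

/-- The `k`-th largest value among `f 1, …, f M`. -/
def kthLargest {M : ℕ} (f : Fin M → ℝ) (k : ℕ) : ℝ :=
  sSup {t : ℝ | k ≤ (Finset.univ.filter (fun m => t ≤ f m)).card}

/-- Empirical mean of arm `i` in episode `m`, given rewards `r` indexed by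
episode/arm/pull-index. -/
def empMean {M K : ℕ} {Ω : Type*} {n : Fin M → Fin K → ℕ}
    (r : (Σ m : Fin M, Σ i : Fin K, Fin (n m i)) → Ω → ℝ) (m : Fin M) (i : Fin K)
    (ω : Ω) : ℝ :=
  (∑ s : Fin (n m i), r ⟨m, i, s⟩ ω) / (n m i)

end

/-!
Call an episode *good* if its true Lipschitz constant is at least `L - εα`, and *spoiled* if one
of its empirical means is off by at least `ε' Δ / 2`, where `ε' = εβ - εα`. Moving every mean by
less than `ε' Δ / 2` moves every difference quotient by less than `ε'`, so a good unspoiled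
episode has `L̂_m > L - εβ`. Hence if `ℓ_β ≤ L - εβ`, fewer than `⌈βM⌉` good episodes are
unspoiled, i.e. at least `(α - β) M` good episodes are spoiled. Hoeffding's inequality and a
union bound over the arms bound the probability that an episode is spoiled by
`2K exp (-τ Δ² ε'² / 2)`; the episodes are independent, so a union bound over the sets of spoiled
good episodes gives `2 ^ M (2K exp (-τ Δ² ε'² / 2)) ^ ((α - β) M)`, which the lower bound on `τ`
turns into the claim.
-/

section Hoeffding

variable {Ω ι : Type*} [MeasurableSpace Ω] {P : Measure Ω} [Fintype ι]

lemma measureReal_card_mul_le_sum_le {X : ι → Ω → ℝ} (hind : iIndepFun X P)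
    (hX : ∀ i, HasSubgaussianMGF (X i) (1 / 4) P) {ε : ℝ} (hε : 0 ≤ ε) :
    P.real {ω | Fintype.card ι * ε ≤ ∑ i, X i ω} ≤ exp (-2 * Fintype.card ι * ε ^ 2) := by
  refine (HasSubgaussianMGF.measure_sum_ge_le_of_iIndepFun hind (fun i _ ↦ hX i)
    (by positivity)).trans_eq ?_
  rcases (Fintype.card ι).eq_zero_or_pos with h | h
  · simp [h]
  · congr 1
    simp only [sum_const, card_univ, nsmul_eq_mul]
    push_cast
    field_simp
    ring

lemma measureReal_le_abs_mean_sub_le [IsProbabilityMeasure P] {Y : ι → Ω → ℝ}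
    (hind : iIndepFun Y P) (hmeas : ∀ i, Measurable (Y i))
    (hY : ∀ i, ∀ᵐ ω ∂P, Y i ω ∈ Set.Icc 0 1) {p : ℝ} (hp : ∀ i, P[Y i] = p)
    (hι : 0 < Fintype.card ι) {ε : ℝ} (hε : 0 ≤ ε) :
    P.real {ω | ε ≤ |(∑ i, Y i ω) / Fintype.card ι - p|}
      ≤ 2 * exp (-2 * Fintype.card ι * ε ^ 2) := by
  set N : ℝ := (Fintype.card ι : ℝ)
  have hN : 0 < N := by positivity
  have hsubG : ∀ i, HasSubgaussianMGF (fun ω ↦ Y i ω - p) (1 / 4) P := by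
    intro i
    have := hasSubgaussianMGF_of_mem_Icc (hmeas i).aemeasurable (hY i)
    rw [hp i] at this
    convert this using 1
    norm_num
  have hsum : ∀ ω, (∑ i, Y i ω) / N - p = (∑ i, (Y i ω - p)) / N := by
    intro ω
    rw [sum_sub_distrib]
    simp only [sum_const, card_univ, nsmul_eq_mul, N]
    field_simp
  have hsub : {ω | ε ≤ |(∑ i, Y i ω) / N - p|}
      ⊆ {ω | N * ε ≤ ∑ i, (Y i ω - p)} ∪ {ω | N * ε ≤ ∑ i, -(Y i ω - p)} := by
    intro ω hω
    simp only [Set.mem_union, Set.mem_ofPred_eq, hsum, abs_div, abs_of_pos hN,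
      le_div_iff₀ hN, sum_neg_distrib] at hω ⊢
    rcases le_abs.mp hω with h | h
    · exact Or.inl (by linarith)
    · exact Or.inr (by linarith)
  calc P.real {ω | ε ≤ |(∑ i, Y i ω) / N - p|}
      ≤ P.real {ω | N * ε ≤ ∑ i, (Y i ω - p)} + P.real {ω | N * ε ≤ ∑ i, -(Y i ω - p)} :=
        (measureReal_mono hsub).trans (measureReal_union_le _ _)
    _ ≤ exp (-2 * N * ε ^ 2) + exp (-2 * N * ε ^ 2) := by
        gcongr
        · exact measureReal_card_mul_le_sum_le
            (hind.comp _ fun _ ↦ measurable_id.sub_const p) hsubG hε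
        · exact measureReal_card_mul_le_sum_le (X := fun i ω ↦ -(Y i ω - p))
            (hind.comp _ fun _ ↦ (measurable_id.sub_const p).neg) (fun i ↦ (hsubG i).neg) hε
    _ = 2 * exp (-2 * N * ε ^ 2) := by ring

end Hoeffding

lemma integral_eq_of_eq_zero_or_eq_one {Ω : Type*} [MeasurableSpace Ω] {P : Measure Ω}
    {Y : Ω → ℝ} (hY : Measurable Y) (h01 : ∀ ω, Y ω = 0 ∨ Y ω = 1) {p : ℝ} (hp : 0 ≤ p)
    (h : P {ω | Y ω = 1} = ENNReal.ofReal p) : P[Y] = p := by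
  have hind : Y = (Y ⁻¹' {1}).indicator 1 := by
    ext ω
    rcases h01 ω with h | h <;> simp [Set.indicator, h]
  rw [hind, integral_indicator_one (hY (measurableSet_singleton 1)), measureReal_def]
  exact (congrArg ENNReal.toReal h).trans (ENNReal.toReal_ofReal hp)

lemma ProbabilityTheory.iIndepFun.curry {Ω ι : Type*} [MeasurableSpace Ω] {P : Measure Ω}
    {κ : ι → Type*} {𝓧 : (i : ι) → κ i → Type*} {m𝓧 : ∀ i j, MeasurableSpace (𝓧 i j)}
    {X : (p : (i : ι) × κ i) → Ω → 𝓧 p.1 p.2} (mX : ∀ p, Measurable (X p))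
    (h : iIndepFun X P) :
    iIndepFun (fun i ω j ↦ X ⟨i, j⟩ ω) P := by
  have := h.isProbabilityMeasure
  have : ∀ p, IsProbabilityMeasure (P.map (X p)) :=
    fun p ↦ Measure.isProbabilityMeasure_map (mX p).aemeasurable
  rw [iIndepFun_iff_map_fun_eq_infinitePi_map (by fun_prop)]
  have hcomp : (fun ω i j ↦ X ⟨i, j⟩ ω) = MeasurableEquiv.piCurry 𝓧 ∘ fun ω p ↦ X p ω := rfl
  rw [hcomp, ← Measure.map_map (by fun_prop) (by fun_prop),
    (iIndepFun_iff_map_fun_eq_infinitePi_map (by fun_prop)).1 h,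
    Measure.infinitePi_map_piCurry fun i j ↦ P.map (X ⟨i, j⟩)]
  congrm Measure.infinitePi fun i ↦ ?_
  rw [(iIndepFun_iff_map_fun_eq_infinitePi_map (by fun_prop)).1 (h.precomp sigma_mk_injective)]

lemma measureReal_le_card_filter_mem_le {Ω ι : Type*} [MeasurableSpace Ω] {P : Measure Ω}
    {B : ι → Set Ω} (hB : iIndepSet B P) (G : Finset ι) [∀ ω, DecidablePred (ω ∈ B ·)] {q : ℝ}
    (hq : ∀ i ∈ G, P.real (B i) ≤ q) (N : ℕ) :
    P.real {ω | N ≤ #{i ∈ G | ω ∈ B i}} ≤ (#G).choose N * q ^ N := by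
  have := hB.isProbabilityMeasure
  have hsub : {ω | N ≤ #{i ∈ G | ω ∈ B i}} ⊆ ⋃ S ∈ G.powersetCard N, ⋂ i ∈ S, B i := by
    intro ω hω
    obtain ⟨S, hS, hcard⟩ := exists_subset_card_eq hω
    refine Set.mem_biUnion (mem_powersetCard.mpr ⟨hS.trans (filter_subset _ _), hcard⟩) ?_
    exact Set.mem_iInter₂.mpr fun i hi ↦ (mem_filter.mp (hS hi)).2
  calc P.real {ω | N ≤ #{i ∈ G | ω ∈ B i}}
      ≤ ∑ S ∈ G.powersetCard N, P.real (⋂ i ∈ S, B i) :=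
        (measureReal_mono hsub (measure_ne_top P _)).trans (measureReal_biUnion_finset_le _ _)
    _ = ∑ S ∈ G.powersetCard N, ∏ i ∈ S, P.real (B i) := by
        refine sum_congr rfl fun S _ ↦ ?_
        simp only [measureReal_def, hB.meas_biInter S, ENNReal.toReal_prod]
    _ ≤ ∑ S ∈ G.powersetCard N, q ^ N := by
        refine sum_le_sum fun S hS ↦ ?_
        obtain ⟨hSG, hcard⟩ := mem_powersetCard.mp hS
        rw [← hcard, ← prod_const]
        exact prod_le_prod (fun _ _ ↦ measureReal_nonneg) fun i hi ↦ hq i (hSG hi)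
    _ = (#G).choose N * q ^ N := by rw [sum_const, card_powersetCard, nsmul_eq_mul]

lemma sub_mul_le_cast_sub_ceil {g M : ℕ} {α β : ℝ} (hβ : 0 ≤ β) (hβα : β ≤ α)
    (hg : α * M ≤ g) : (α - β) * M ≤ ((g + 1 - ⌈β * M⌉₊ : ℕ) : ℝ) := by
  have hk : ⌈β * M⌉₊ ≤ g := Nat.ceil_le.mpr (by nlinarith)
  have := Nat.ceil_lt_add_one (show 0 ≤ β * M by positivity)
  rw [Nat.cast_sub (by omega)]
  push_cast
  linarith

lemma mul_exp_neg_two_mul_le_exp {a b c : ℝ} (ha : 0 < a) (h : log a + b ≤ c) :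
    a * exp (-2 * c) ≤ exp (-(c + b)) := by
  rw [← exp_log ha, ← exp_add]
  gcongr
  linarith

lemma choose_mul_pow_le_exp {g N M : ℕ} (hg : g ≤ M) {q c δ : ℝ} (hc : 0 ≤ c) (hδ : 0 < δ)
    (hN : δ * M ≤ N) (hq0 : 0 ≤ q) (hq : q ≤ exp (-(c + 1 / δ))) :
    g.choose N * q ^ N ≤ exp (-c * δ * M) := by
  have h2M : (2 : ℝ) ^ M ≤ exp M := by
    rw [← exp_one_pow]
    gcongr
    linarith [add_one_le_exp 1]
  calc (g.choose N : ℝ) * q ^ N ≤ 2 ^ M * exp (-(c + 1 / δ)) ^ N := by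
        gcongr
        exact_mod_cast (Nat.choose_le_two_pow g N).trans (Nat.pow_le_pow_right two_pos hg)
    _ ≤ exp M * exp (-(c + 1 / δ) * (δ * M)) := by
        rw [← exp_nat_mul, mul_comm (N : ℝ)]
        refine mul_le_mul h2M (exp_le_exp.mpr (mul_le_mul_of_nonpos_left hN ?_)) (by positivity)
          (by positivity)
        have : 0 < 1 / δ := by positivity
        linarith
    _ = exp (-c * δ * M) := by
        rw [← exp_add]
        congr 1
        field_simp
        ring

section Lipschitz

variable {K D : ℕ} {x : Fin K → EuclideanSpace ℝ (Fin D)}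

lemma finite_setOf_exists_ne (F : Fin K → Fin K → ℝ) :
    {r : ℝ | ∃ i j, i ≠ j ∧ r = F i j}.Finite := by
  refine (Set.finite_range fun p : Fin K × Fin K ↦ F p.1 p.2).subset ?_
  rintro _ ⟨i, j, -, rfl⟩
  exact ⟨(i, j), rfl⟩

lemma nonempty_setOf_exists_ne (hK : 2 ≤ K) (F : Fin K → Fin K → ℝ) :
    {r : ℝ | ∃ i j, i ≠ j ∧ r = F i j}.Nonempty :=
  ⟨_, ⟨0, by omega⟩, ⟨1, by omega⟩, by simp [Fin.ext_iff], rfl⟩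

lemma le_lipConst (a : Fin K → ℝ) {i j : Fin K} (hij : i ≠ j) :
    |a i - a j| / dist (x i) (x j) ≤ lipConst x a :=
  le_csSup (finite_setOf_exists_ne _).bddAbove ⟨i, j, hij, rfl⟩

lemma exists_lipConst_eq (hK : 2 ≤ K) (a : Fin K → ℝ) :
    ∃ i j, i ≠ j ∧ lipConst x a = |a i - a j| / dist (x i) (x j) :=
  (nonempty_setOf_exists_ne hK _).csSup_mem (finite_setOf_exists_ne _)

lemma Δemb_le_dist {i j : Fin K} (hij : i ≠ j) : Δemb x ≤ dist (x i) (x j) :=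
  csInf_le (finite_setOf_exists_ne _).bddBelow ⟨i, j, hij, rfl⟩

lemma Δemb_pos (hK : 2 ≤ K) (hx : Function.Injective x) : 0 < Δemb x := by
  obtain ⟨i, j, hij, h⟩ := (nonempty_setOf_exists_ne hK _).csInf_mem (finite_setOf_exists_ne _)
  rw [Δemb, h]
  exact dist_pos.mpr (hx.ne hij)

lemma lipConst_sub_lt_lipConst (hK : 2 ≤ K) (hx : Function.Injective x) {ε : ℝ} (hε : 0 < ε)
    {a b : Fin K → ℝ} (hab : ∀ i, |b i - a i| < ε * Δemb x / 2) :
    lipConst x a - ε < lipConst x b := by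
  obtain ⟨i, j, hij, ha⟩ := exists_lipConst_eq (x := x) hK a
  have hd : Δemb x ≤ dist (x i) (x j) := Δemb_le_dist hij
  have hd0 : 0 < dist (x i) (x j) := (Δemb_pos hK hx).trans_le hd
  have htri : |a i - a j| ≤ |b i - a i| + |b i - b j| + |b j - a j| := by
    calc |a i - a j| = |-(b i - a i) + (b i - b j) + (b j - a j)| := by congr 1; ring
      _ ≤ _ := (abs_add_three _ _ _).trans_eq (by rw [abs_neg])
  have hlt : |a i - a j| < |b i - b j| + ε * dist (x i) (x j) := by
    nlinarith [hab i, hab j]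
  calc lipConst x a - ε = |a i - a j| / dist (x i) (x j) - ε := by rw [ha]
    _ < |b i - b j| / dist (x i) (x j) := by
        rw [sub_lt_iff_lt_add, div_add' _ _ _ hd0.ne', div_lt_div_iff_of_pos_right hd0]
        exact hlt
    _ ≤ lipConst x b := le_lipConst b hij

end Lipschitz

lemma lt_kthLargest {M : ℕ} (f : Fin M → ℝ) {k : ℕ} (hk : 1 ≤ k) {b : ℝ}
    {T : Finset (Fin M)} (hT : k ≤ #T) (hb : ∀ m ∈ T, b < f m) :
    b < kthLargest f k := by
  have hTne : T.Nonempty := card_pos.mp (hk.trans hT)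
  have hbdd : BddAbove {t : ℝ | k ≤ #{m | t ≤ f m}} := by
    obtain ⟨B, hB⟩ := (Set.finite_range f).bddAbove
    refine ⟨B, fun t ht ↦ ?_⟩
    obtain ⟨m, hm⟩ := card_pos.mp (hk.trans ht)
    exact (mem_filter.mp hm).2.trans (hB ⟨m, rfl⟩)
  have hmem : T.inf' hTne f ∈ {t : ℝ | k ≤ #{m | t ≤ f m}} :=
    hT.trans (card_le_card fun m hm ↦ mem_filter.mpr ⟨mem_univ m, inf'_le f hm⟩)
  exact ((lt_inf'_iff hTne).mpr hb).trans_le (le_csSup hbdd hmem)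

lemma le_card_filter_of_kthLargest_le {M : ℕ} {f : Fin M → ℝ} {k : ℕ} (hk : 1 ≤ k) {b : ℝ}
    (hf : kthLargest f k ≤ b) {G : Finset (Fin M)} {B : Fin M → Prop} [DecidablePred B]
    (hB : ∀ m ∈ G, ¬ B m → b < f m) :
    #G + 1 - k ≤ #{m ∈ G | B m} := by
  have hgood : #{m ∈ G | ¬ B m} < k := by
    by_contra! h
    exact (lt_kthLargest f hk h fun m hm ↦ hB m (mem_filter.mp hm).1 (mem_filter.mp hm).2).not_ge hf
  have := card_filter_add_card_filter_not (s := G) fun m ↦ B m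
  omega

lemma le_card_filter_exists_le_abs_sub_of_kthLargest_le {M K D : ℕ} (hK : 2 ≤ K)
    {x : Fin K → EuclideanSpace ℝ (Fin D)} (hx : Function.Injective x) {a μ : Fin M → Fin K → ℝ}
    {k : ℕ} (hk : 1 ≤ k) {b ε : ℝ} (hε : 0 < ε) (ha : kthLargest (fun m ↦ lipConst x (a m)) k ≤ b)
    {G : Finset (Fin M)} (hG : ∀ m ∈ G, b + ε ≤ lipConst x (μ m)) :
    #G + 1 - k ≤ #{m ∈ G | ∃ i, ε * Δemb x / 2 ≤ |a m i - μ m i|} := by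
  refine le_card_filter_of_kthLargest_le hk ha fun m hm hclose ↦ ?_
  simp only [not_exists, not_le] at hclose
  linarith [hG m hm, lipConst_sub_lt_lipConst hK hx hε hclose]

section Bandit

variable {M K : ℕ} {n : Fin M → Fin K → ℕ} {Ω : Type*} [MeasurableSpace Ω] {P : Measure Ω}
  {r : (Σ m : Fin M, Σ i : Fin K, Fin (n m i)) → Ω → ℝ}

lemma measureReal_exists_le_abs_empMean_sub_le [IsProbabilityMeasure P] (hindep : iIndepFun r P)
    (hmeas : ∀ idx, Measurable (r idx)) (hr : ∀ idx, ∀ᵐ ω ∂P, r idx ω ∈ Set.Icc 0 1)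
    {μ : Fin M → Fin K → ℝ} (hmean : ∀ idx, P[r idx] = μ idx.1 idx.2.1) {τ : ℝ} (hτ : 0 < τ)
    (hn : ∀ m i, τ ≤ n m i) {ε : ℝ} (hε : 0 ≤ ε) (m : Fin M) :
    P.real {ω | ∃ i, ε ≤ |empMean r m i ω - μ m i|} ≤ 2 * K * exp (-2 * τ * ε ^ 2) := by
  rw [Set.ofPred_exists]
  refine (measureReal_iUnion_fintype_le _).trans ?_
  calc ∑ i, P.real {ω | ε ≤ |empMean r m i ω - μ m i|}
      ≤ ∑ _i : Fin K, 2 * exp (-2 * τ * ε ^ 2) := by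
        refine sum_le_sum fun i _ ↦ ?_
        have hni : (0 : ℝ) < n m i := hτ.trans_le (hn m i)
        have h := measureReal_le_abs_mean_sub_le (Y := fun s : Fin (n m i) ↦ r ⟨m, i, s⟩)
          (hindep.precomp (g := fun s : Fin (n m i) ↦ ⟨m, i, s⟩) fun _ _ h ↦ by simpa using h)
          (fun s ↦ hmeas _) (p := μ m i) (fun s ↦ hr _) (fun s ↦ hmean ⟨m, i, s⟩)
          (by simpa using hni) hε
        simp only [Fintype.card_fin] at h
        refine h.trans (mul_le_mul_of_nonneg_left (exp_le_exp.mpr ?_) two_pos.le)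
        nlinarith [hn m i, sq_nonneg ε]
    _ = 2 * K * exp (-2 * τ * ε ^ 2) := by
        rw [sum_const, card_univ, Fintype.card_fin, nsmul_eq_mul]
        ring

lemma iIndepSet_exists_le_abs_empMean_sub (hindep : iIndepFun r P)
    (hmeas : ∀ idx, Measurable (r idx)) (μ : Fin M → Fin K → ℝ) (ε : ℝ) :
    iIndepSet (fun m ↦ {ω | ∃ i, ε ≤ |empMean r m i ω - μ m i|}) P := by
  have hZ := iIndepFun.curry (𝓧 := fun _ _ ↦ ℝ) (X := r) hmeas hindep
  set A : ∀ m : Fin M, Set ((Σ i : Fin K, Fin (n m i)) → ℝ) :=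
    fun m ↦ {y | ∃ i, ε ≤ |(∑ s, y ⟨i, s⟩) / n m i - μ m i|}
  have hA : ∀ m, MeasurableSet (A m) := fun m ↦ by
    simp only [A, Set.ofPred_exists]
    exact MeasurableSet.iUnion fun i ↦ measurableSet_le measurable_const (by fun_prop)
  refine (iIndepSet_iff_meas_biInter fun m ↦ ?_).2 fun S ↦
    hZ.measure_inter_preimage_eq_mul S fun m _ ↦ hA m
  exact (measurable_pi_lambda _ fun j ↦ hmeas _) (hA m)

end Bandit

theorem stmt9_general {K D M : ℕ} (hK : 2 ≤ K) (hM : 1 ≤ M)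
    (x : Fin K → EuclideanSpace ℝ (Fin D))
    (hx : Function.Injective x)
    (L : ℝ)
    (μv : Fin M → Fin K → ℝ) (hμ : ∀ m, μv m ∈ Phi x L)
    (α εα : ℝ)
    (hlearn : α * M ≤
      ((Finset.univ.filter (fun m => L - εα ≤ lipConst x (μv m))).card : ℝ))
    (β εβ : ℝ) (hβ0 : 0 < β) (hβα : β < α) (hεβ : εα < εβ)
    (τ : ℝ) (hτ0 : 0 < τ)
    (n : Fin M → Fin K → ℕ) (hn : ∀ m i, τ ≤ (n m i : ℝ))
    (hτ : 4 / ((Δemb x) ^ 2 * (εβ - εα) ^ 2) *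
            (Real.log (2 * K) + 1 / (α - β)) ≤ τ)
    {Ω : Type*} [MeasurableSpace Ω] (P : Measure Ω) [IsProbabilityMeasure P]
    (r : (Σ m : Fin M, Σ i : Fin K, Fin (n m i)) → Ω → ℝ)
    (hmeas : ∀ idx, Measurable (r idx))
    (h01 : ∀ idx ω, r idx ω = 0 ∨ r idx ω = 1)
    (hmean : ∀ idx, P {ω | r idx ω = 1} = ENNReal.ofReal (μv idx.1 idx.2.1))
    (hindep : iIndepFun r P) :
    (P {ω |
        kthLargest (fun m => lipConst x (fun i => empMean r m i ω)) ⌈β * (M : ℝ)⌉₊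
          ≤ L - εβ}).toReal
    ≤ Real.exp (-(τ * (Δemb x) ^ 2 * (εβ - εα) ^ 2 / 4) * (α - β) * M) := by
  set ε' := εβ - εα
  set c := τ * Δemb x ^ 2 * ε' ^ 2 / 4
  have hΔ : 0 < Δemb x := Δemb_pos hK hx
  have hε' : 0 < ε' := sub_pos.mpr hεβ
  have hc : log (2 * K) + 1 / (α - β) ≤ c := by
    rw [div_mul_eq_mul_div, div_le_iff₀ (by positivity)] at hτ
    simp only [c]
    linarith
  have hint : ∀ idx, P[r idx] = μv idx.1 idx.2.1 := fun idx ↦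
    integral_eq_of_eq_zero_or_eq_one (hmeas idx) (h01 idx) ((hμ _).1 _).1 (hmean idx)
  have hr : ∀ idx, ∀ᵐ ω ∂P, r idx ω ∈ Set.Icc 0 1 := fun idx ↦ ae_of_all _ fun ω ↦ by
    rcases h01 idx ω with h | h <;> simp [h]
  set G := univ.filter fun m ↦ L - εα ≤ lipConst x (μv m)
  set N := #G + 1 - ⌈β * (M : ℝ)⌉₊
  calc P.real {ω | kthLargest (fun m ↦ lipConst x fun i ↦ empMean r m i ω) ⌈β * (M : ℝ)⌉₊
        ≤ L - εβ}
      ≤ P.real {ω | N ≤ #{m ∈ G | ∃ i, ε' * Δemb x / 2 ≤ |empMean r m i ω - μv m i|}} :=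
        measureReal_mono fun ω hω ↦ le_card_filter_exists_le_abs_sub_of_kthLargest_le hK hx
          (Nat.ceil_pos.mpr (by positivity)) hε' hω fun m hm ↦ by linarith [(mem_filter.mp hm).2]
    _ ≤ (#G).choose N * (2 * K * exp (-2 * τ * (ε' * Δemb x / 2) ^ 2)) ^ N :=
        measureReal_le_card_filter_mem_le (iIndepSet_exists_le_abs_empMean_sub hindep hmeas _ _)
          G (fun m _ ↦ measureReal_exists_le_abs_empMean_sub_le hindep hmeas hr hint hτ0 hn
            (by positivity) m) N
    _ ≤ exp (-c * (α - β) * M) := by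
        refine choose_mul_pow_le_exp (card_le_univ G |>.trans_eq (Fintype.card_fin M))
          (by positivity) (sub_pos.mpr hβα) (sub_mul_le_cast_sub_ceil hβ0.le hβα.le hlearn)
          (by positivity) ?_
        convert mul_exp_neg_two_mul_le_exp (by positivity) hc using 3
        ring

theorem stmt9 {K D M : ℕ} (hK : 2 ≤ K) (hM : 1 ≤ M)
    (x : Fin K → EuclideanSpace ℝ (Fin D))
    (hx : Function.Injective x)
    (hcube : ∀ i t, x i t ∈ Set.Icc (0:ℝ) 1)
    (L : ℝ) (hL : 0 < L)
    (μv : Fin M → Fin K → ℝ) (hμ : ∀ m, μv m ∈ Phi x L)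
    (α εα : ℝ) (hα0 : 0 < α) (hα1 : α ≤ 1) (hεα : 0 < εα)
    (hlearn : α * M ≤
      ((Finset.univ.filter (fun m => L - εα ≤ lipConst x (μv m))).card : ℝ))
    (β εβ : ℝ) (hβ0 : 0 < β) (hβα : β < α) (hεβ : εα < εβ)
    (τ : ℝ) (hτ0 : 0 < τ)
    (n : Fin M → Fin K → ℕ) (hn : ∀ m i, τ ≤ (n m i : ℝ))
    (hτ : 4 / ((Δemb x) ^ 2 * (εβ - εα) ^ 2) *
            (Real.log (2 * K) + 1 / (α - β)) ≤ τ)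
    {Ω : Type*} [MeasurableSpace Ω] (P : Measure Ω) [IsProbabilityMeasure P]
    (r : (Σ m : Fin M, Σ i : Fin K, Fin (n m i)) → Ω → ℝ)
    (hmeas : ∀ idx, Measurable (r idx))
    (h01 : ∀ idx ω, r idx ω = 0 ∨ r idx ω = 1)
    (hmean : ∀ idx, P {ω | r idx ω = 1} = ENNReal.ofReal (μv idx.1 idx.2.1))
    (hindep : iIndepFun r P) :
    (P {ω |
        kthLargest (fun m => lipConst x (fun i => empMean r m i ω)) ⌈β * (M : ℝ)⌉₊
          ≤ L - εβ}).toReal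
    ≤ Real.exp (-(τ * (Δemb x) ^ 2 * (εβ - εα) ^ 2 / 4) * (α - β) * M) :=
  stmt9_general hK hM x hx L μv hμ α εα hlearn β εβ hβ0 hβα hεβ τ hτ0 n hn hτ P r hmeas h01 hmean
    hindep
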